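/- arXiv:math/0001043 — 2 statements merged into one kernel-verified Lean document; each statement's English description precedes it below -/
import Mathlib

section
/- The group $\widetilde{SL}(2,\mathbb{Z})$, defined as the preimage of $SL(2,\mathbb{Z})$ in the central extension $\widetilde{SL}(2,\mathbb{R})$ of $SL(2,\mathbb{R})$ by $\mathbb{Z}$, has the presentation $\langle a_1, a_2, t \mid a_1 a_2 a_1 = a_2 a_1 a_2,\ (a_1 a_2)^6 = t^2,\ [a_1,t] = [a_2,t] = 1 \rangle$. Equivalently: the abstract group with this presentation is a central extension of $SL(2,\mathbb{Z})$ by the infinite cyclic group generated by $t$, where $SL(2,\mathbb{Z})$ has presentation $\langle g_1, g_2 \mid g_1 g_2 g_1 = g_2 g_1 g_2,\ (g_1 g_2)^6 = 1 \rangle$. -/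
/-!
STATEMENT 7: The group `G = ⟨a₁,a₂,t ∣ a₁a₂a₁ = a₂a₁a₂, (a₁a₂)⁶ = t²,
[a₁,t] = [a₂,t] = 1⟩` (the presentation of `widetilde{SL}(2,ℤ)`) is a central
extension of `SL(2,ℤ) = ⟨g₁,g₂ ∣ g₁g₂g₁ = g₂g₁g₂, (g₁g₂)⁶ = 1⟩` by the infinite
cyclic group generated by `t`: there is a surjection `G → SL(2,ℤ)` sending
`aᵢ ↦ gᵢ`, `t ↦ 1`, whose kernel is the central subgroup generated by `t`. -/

open FreeGroup

/-- Generators `a₁ = 0`, `a₂ = 1`, `t = 2`. -/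
def tildeRels : Set (FreeGroup (Fin 3)) :=
  { of 0 * of 1 * of 0 * (of 1 * of 0 * of 1)⁻¹,
    (of 0 * of 1) ^ 6 * (of 2 * of 2)⁻¹,
    of 0 * of 2 * (of 2 * of 0)⁻¹,
    of 1 * of 2 * (of 2 * of 1)⁻¹ }

/-- The group `widetilde{SL}(2,ℤ)` given by the presentation above. -/
def TildeSL2Z : Type := PresentedGroup tildeRels

instance : Group TildeSL2Z := by unfold TildeSL2Z; infer_instance

/-- Generators `g₁ = 0`, `g₂ = 1`. -/
def sl2zRels : Set (FreeGroup (Fin 2)) :=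
  { of 0 * of 1 * of 0 * (of 1 * of 0 * of 1)⁻¹,
    (of 0 * of 1) ^ 6 }

/-- `SL(2,ℤ)` via the presentation `⟨g₁,g₂ ∣ g₁g₂g₁ = g₂g₁g₂, (g₁g₂)⁶ = 1⟩`. -/
def SL2ZPres : Type := PresentedGroup sl2zRels

instance : Group SL2ZPres := by unfold SL2ZPres; infer_instance

/-- `a₁`, `a₂`, `t` in `widetilde{SL}(2,ℤ)`. -/
def a₁ : TildeSL2Z := PresentedGroup.of (0 : Fin 3)
def a₂ : TildeSL2Z := PresentedGroup.of (1 : Fin 3)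
def tGen : TildeSL2Z := PresentedGroup.of (2 : Fin 3)

/-- `g₁`, `g₂` in the presented `SL(2,ℤ)`. -/
def s₁ : SL2ZPres := PresentedGroup.of (0 : Fin 2)
def s₂ : SL2ZPres := PresentedGroup.of (1 : Fin 2)

/-!
Sending `aᵢ ↦ gᵢ`, `t ↦ 1` respects the relations, and conversely `gᵢ ↦ aᵢ` is well defined
into `G ⧸ ⟨t⟩`, because modulo `t` the relations of `G` become those of `SL(2,ℤ)`. The composite
`G → SL(2,ℤ) → G ⧸ ⟨t⟩` is the quotient map, so the kernel is `⟨t⟩`. The element `t` is central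
since it commutes with the generators, and it has infinite order because `aᵢ ↦ 1`, `t ↦ 6`
defines a homomorphism to `ℤ`.
-/

theorem Subgroup.normal_of_le_center {G : Type*} [Group G] {H : Subgroup G}
    (hH : H ≤ center G) : H.Normal :=
  ⟨fun n hn g => by rwa [mem_center_iff.mp (hH hn) g, mul_inv_cancel_right]⟩

theorem PresentedGroup.mem_center_of_forall_commute_of {α : Type*} {rels : Set (FreeGroup α)}
    {g : PresentedGroup rels} (hg : ∀ j, Commute (of j) g) :
    g ∈ Subgroup.center (PresentedGroup rels) := by
  simpa [Subgroup.center_eq_iInf (closure_range_of rels), Subgroup.mem_centralizer_singleton_iff,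
    Commute, SemiconjBy, eq_comm] using hg

theorem MonoidHom.ker_eq_of_comp_eq_mk' {G H : Type*} [Group G] [Group H] {N : Subgroup G}
    [N.Normal] {φ : G →* H} (σ : H →* G ⧸ N) (hσ : σ.comp φ = QuotientGroup.mk' N)
    (hN : N ≤ φ.ker) : φ.ker = N := by
  refine le_antisymm ?_ hN
  calc φ.ker ≤ (σ.comp φ).ker := by simpa [MonoidHom.comap_ker] using φ.ker_le_comap σ.ker
    _ = N := by rw [hσ, QuotientGroup.ker_mk']

theorem s₁_mul_s₂_mul_s₁ : s₁ * s₂ * s₁ = s₂ * s₁ * s₂ :=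
  PresentedGroup.mk_eq_mk_of_mul_inv_mem (x := of 0 * of 1 * of 0) (y := of 1 * of 0 * of 1)
    (by simp [sl2zRels])

theorem s₁_mul_s₂_pow_six : (s₁ * s₂) ^ 6 = 1 :=
  PresentedGroup.one_of_mem (x := (of 0 * of 1) ^ 6) (by simp [sl2zRels])

theorem a₁_mul_a₂_mul_a₁ : a₁ * a₂ * a₁ = a₂ * a₁ * a₂ :=
  PresentedGroup.mk_eq_mk_of_mul_inv_mem (x := of 0 * of 1 * of 0) (y := of 1 * of 0 * of 1)
    (by simp [tildeRels])

theorem a₁_mul_a₂_pow_six : (a₁ * a₂) ^ 6 = tGen * tGen :=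
  PresentedGroup.mk_eq_mk_of_mul_inv_mem (x := (of 0 * of 1) ^ 6) (y := of 2 * of 2)
    (by simp [tildeRels])

theorem commute_a₁_tGen : Commute a₁ tGen :=
  PresentedGroup.mk_eq_mk_of_mul_inv_mem (x := of 0 * of 2) (y := of 2 * of 0)
    (by simp [tildeRels])

theorem commute_a₂_tGen : Commute a₂ tGen :=
  PresentedGroup.mk_eq_mk_of_mul_inv_mem (x := of 1 * of 2) (y := of 2 * of 1)
    (by simp [tildeRels])

theorem tGen_mem_center : tGen ∈ Subgroup.center TildeSL2Z :=
  PresentedGroup.mem_center_of_forall_commute_of fun j => by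
    fin_cases j
    exacts [commute_a₁_tGen, commute_a₂_tGen, Commute.refl tGen]

instance : (Subgroup.zpowers tGen).Normal :=
  Subgroup.normal_of_le_center (Subgroup.zpowers_le.mpr tGen_mem_center)

def tildeToSL2Z : TildeSL2Z →* SL2ZPres :=
  PresentedGroup.toGroup (f := ![s₁, s₂, 1])
    (by simp [tildeRels, s₁_mul_s₂_mul_s₁, s₁_mul_s₂_pow_six])

noncomputable def sl2zToQuotient : SL2ZPres →* TildeSL2Z ⧸ Subgroup.zpowers tGen :=
  PresentedGroup.toGroup (rels := sl2zRels) (f := ![(a₁ : TildeSL2Z ⧸ _), a₂]) (by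
    simp only [sl2zRels, Set.forall_mem_insert, Set.mem_singleton_iff, forall_eq,
      _root_.map_mul, _root_.map_inv, map_pow, FreeGroup.lift_apply_of, Matrix.cons_val_zero,
      Matrix.cons_val_one, mul_inv_eq_one,
      ← QuotientGroup.mk_mul, ← QuotientGroup.mk_pow, a₁_mul_a₂_mul_a₁, a₁_mul_a₂_pow_six,
      QuotientGroup.eq_one_iff]
    exact ⟨trivial, mul_mem (Subgroup.mem_zpowers tGen) (Subgroup.mem_zpowers tGen)⟩)

-- The weight of `t` is forced by `(a₁a₂)⁶ = t²`: `2 · 6 = 6 · (1 + 1)`.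
def tildeDegree : TildeSL2Z →* Multiplicative ℤ :=
  PresentedGroup.toGroup (f := ![.ofAdd 1, .ofAdd 1, .ofAdd 6]) (by simp [tildeRels]; decide)

theorem tildeToSL2Z_a₁ : tildeToSL2Z a₁ = s₁ := PresentedGroup.toGroup.of _
theorem tildeToSL2Z_a₂ : tildeToSL2Z a₂ = s₂ := PresentedGroup.toGroup.of _
theorem tildeToSL2Z_tGen : tildeToSL2Z tGen = 1 := PresentedGroup.toGroup.of _

theorem sl2zToQuotient_s₁ : sl2zToQuotient s₁ = a₁ := PresentedGroup.toGroup.of _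
theorem sl2zToQuotient_s₂ : sl2zToQuotient s₂ = a₂ := PresentedGroup.toGroup.of _

theorem tildeToSL2Z_surjective : Function.Surjective tildeToSL2Z := by
  intro y
  refine PresentedGroup.generated_by sl2zRels tildeToSL2Z.range (fun j => ?_) y
  fin_cases j
  exacts [⟨a₁, tildeToSL2Z_a₁⟩, ⟨a₂, tildeToSL2Z_a₂⟩]

theorem sl2zToQuotient_comp_tildeToSL2Z :
    sl2zToQuotient.comp tildeToSL2Z = QuotientGroup.mk' (Subgroup.zpowers tGen) := by
  refine PresentedGroup.ext fun j => ?_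
  fin_cases j
  · exact congrArg sl2zToQuotient tildeToSL2Z_a₁ |>.trans sl2zToQuotient_s₁
  · exact congrArg sl2zToQuotient tildeToSL2Z_a₂ |>.trans sl2zToQuotient_s₂
  · show sl2zToQuotient (tildeToSL2Z tGen) = (tGen : TildeSL2Z ⧸ _)
    rw [tildeToSL2Z_tGen, _root_.map_one, eq_comm, QuotientGroup.eq_one_iff]
    exact Subgroup.mem_zpowers tGen

theorem ker_tildeToSL2Z : tildeToSL2Z.ker = Subgroup.zpowers tGen :=
  MonoidHom.ker_eq_of_comp_eq_mk' sl2zToQuotient sl2zToQuotient_comp_tildeToSL2Z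
    (Subgroup.zpowers_le.mpr tildeToSL2Z_tGen)

theorem tildeDegree_tGen : tildeDegree tGen = .ofAdd 6 := PresentedGroup.toGroup.of _

theorem not_isOfFinOrder_tGen : ¬IsOfFinOrder tGen := fun h =>
  not_isOfFinOrder_of_isMulTorsionFree (by rw [tildeDegree_tGen]; decide)
    (tildeDegree.isOfFinOrder h)

theorem tilde_SL2Z_central_extension :
    ∃ φ : TildeSL2Z →* SL2ZPres,
      φ a₁ = s₁ ∧ φ a₂ = s₂ ∧ φ tGen = 1 ∧
      Function.Surjective φ ∧
      φ.ker = Subgroup.zpowers tGen ∧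
      tGen ∈ Subgroup.center TildeSL2Z ∧
      ∀ ν : ℤ, ν ≠ 0 → tGen ^ ν ≠ 1 :=
  ⟨tildeToSL2Z, tildeToSL2Z_a₁, tildeToSL2Z_a₂, tildeToSL2Z_tGen, tildeToSL2Z_surjective,
    ker_tildeToSL2Z, tGen_mem_center, fun ν hν hν₁ =>
      not_isOfFinOrder_tGen (isOfFinOrder_iff_zpow_eq_one.mpr ⟨ν, hν, hν₁⟩)⟩
end

section
/- Let $\mathfrak{S}$ be an abelian category with a Serre subcategory $\mathfrak{S}'$ satisfying: for any epimorphism $f: A \twoheadrightarrow A'$ with $A \in \mathfrak{S}$ and $A' \in \mathfrak{S}'$, there is $B' \in \mathfrak{S}'$ and $g: B' \to A$ with $fg$ epi. Then for any bounded cochain complex $C$ in $\mathfrak{S}$ all of whose cohomology objects lie in $\mathfrak{S}'$, there exists a bounded cochain complex $E$ in $\mathfrak{S}'$ and a monomorphic cochain map $\iota: E \to C$ which is a quasi-isomorphism. -/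
/-!
STATEMENT 10: Let `𝔖` be an abelian category and `𝔖' ⊆ 𝔖` a Serre subcategory
(closed under subobjects, quotients and extensions) such that for any
epimorphism `f : A ↠ A'` with `A ∈ 𝔖` and `A' ∈ 𝔖'` there are `B' ∈ 𝔖'` and
`g : B' ⟶ A` with `g ≫ f` epi.  Then for any bounded cochain complex `C` in `𝔖`
whose cohomology objects lie in `𝔖'`, there exist a bounded cochain complex `E`
in `𝔖'` and a monomorphic cochain map `ι : E ⟶ C` which is a quasi-isomorphism. -/

open CategoryTheory CategoryTheory.Limits ZeroObject

namespace SerreResolutionAux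

variable {𝔖 : Type*} [Category 𝔖] [Abelian 𝔖]

lemma mono_of_isZero_src {X Y : 𝔖} (f : X ⟶ Y) (h : IsZero X) : Mono f :=
  ⟨fun g h' _ => h.eq_of_tgt g h'⟩

/-- Bundled hypotheses. -/
structure Setup (𝔖 : Type*) [Category 𝔖] [Abelian 𝔖] where
  P : 𝔖 → Prop
  hsub : ∀ {X Y : 𝔖} (f : X ⟶ Y), Mono f → P Y → P X
  hquot : ∀ {X Y : 𝔖} (f : X ⟶ Y), Epi f → P X → P Y
  hext : ∀ S : ShortComplex 𝔖, S.ShortExact → P S.X₁ → P S.X₃ → P S.X₂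
  hlift : ∀ {A A' : 𝔖} (f : A ⟶ A'), Epi f → P A' →
      ∃ (B' : 𝔖) (g : B' ⟶ A), P B' ∧ Epi (g ≫ f)
  C : CochainComplex 𝔖 ℤ
  hcoh : ∀ n : ℤ, P (C.homology n)
  b : ℤ
  hb : ∀ n : ℤ, b < n → IsZero (C.X n)

variable (S : Setup 𝔖)

lemma Setup.hP_of_isZero {X : 𝔖} (hX : IsZero X) : S.P X :=
  S.hsub (0 : X ⟶ S.C.homology (S.b + 1)) (mono_of_isZero_src _ hX) (S.hcoh (S.b + 1))

/-- Exactness of `C.X (n-1) ⟶ C.cycles n ⟶ C.homology n`. -/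
lemma exact_toCycles (n : ℤ) :
    (ShortComplex.mk (S.C.toCycles (n-1) n) (S.C.homologyπ n)
      (S.C.toCycles_comp_homologyπ _ _)).Exact :=
  ShortComplex.exact_of_g_is_cokernel _ (S.C.homologyIsCokernel (n-1) n (by simp))

/-- The data constructed at degree `n`. -/
structure Bundle (n : ℤ) where
  E : 𝔖
  i : E ⟶ S.C.X n
  T : 𝔖
  j : T ⟶ S.C.X (n + 1)
  f : E ⟶ T
  mono_i : Mono i
  hP : S.P E
  comm : f ≫ j = i ≫ S.C.d n (n + 1)
  hS : ∀ ⦃A : 𝔖⦄ (z : A ⟶ S.C.X n), z ≫ S.C.d n (n + 1) = 0 →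
    ∃ (A' : 𝔖) (π : A' ⟶ A) (_ : Epi π) (e : A' ⟶ E) (w : A' ⟶ S.C.X (n - 1)),
      π ≫ z = e ≫ i + w ≫ S.C.d (n - 1) n
  hI : ∀ ⦃A : 𝔖⦄ (t : A ⟶ T) (w : A ⟶ S.C.X n), t ≫ j = w ≫ S.C.d n (n + 1) →
    ∃ (A' : 𝔖) (π : A' ⟶ A) (_ : Epi π) (e : A' ⟶ E), π ≫ t = e ≫ f

/-- The trivial bundle, used in degrees `> b`. -/
noncomputable def trivialBundle (n : ℤ) (hn : IsZero (S.C.X n)) : Bundle S n where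
  E := 0
  i := 0
  T := 0
  j := 0
  f := 0
  mono_i := mono_of_isZero_src _ (isZero_zero _)
  hP := S.hP_of_isZero (isZero_zero _)
  comm := by simp
  hS := fun A z _ => ⟨A, 𝟙 A, inferInstance, 0, 0, by
    rw [hn.eq_of_tgt z 0]; simp⟩
  hI := fun A t w _ => ⟨A, 𝟙 A, inferInstance, 0, by
    rw [(isZero_zero 𝔖).eq_of_tgt t 0]; simp⟩

/-- The inductive step of the construction. -/
noncomputable def mkStep (n : ℤ) (X : Bundle S (n + 1)) : Bundle S n := by
  haveI := X.mono_i
  -- the preimage of `X.E` under the differential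
  let p1 : pullback (S.C.d n (n + 1)) X.i ⟶ S.C.X n := pullback.fst _ _
  let p2 : pullback (S.C.d n (n + 1)) X.i ⟶ X.E := pullback.snd _ _
  -- the `F` part
  have hPM : S.P (image p2) := S.hsub (image.ι p2) inferInstance X.hP
  have h1 := S.hlift (factorThruImage p2) inferInstance hPM
  let F := h1.choose
  let g : F ⟶ pullback (S.C.d n (n + 1)) X.i := h1.choose_spec.choose
  have hPF : S.P F := h1.choose_spec.choose_spec.1
  have hgepi : Epi (g ≫ factorThruImage p2) := h1.choose_spec.choose_spec.2
  -- the `G` part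
  have h2 := S.hlift (S.C.homologyπ n) inferInstance (S.hcoh n)
  let G := h2.choose
  let g' : G ⟶ S.C.cycles n := h2.choose_spec.choose
  have hPG : S.P G := h2.choose_spec.choose_spec.1
  have hg'epi : Epi (g' ≫ S.C.homologyπ n) := h2.choose_spec.choose_spec.2
  -- the subobject `E`
  let u : F ⊞ G ⟶ S.C.X n := biprod.desc (g ≫ p1) (g' ≫ S.C.iCycles n)
  haveI : StrongEpi (factorThruImage u) := strongEpi_of_epi _
  have sq : CommSq (biprod.desc (g ≫ p2) 0) (factorThruImage u) X.i
      (image.ι u ≫ S.C.d n (n + 1)) := by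
    constructor
    rw [← Category.assoc, image.fac]
    apply biprod.hom_ext'
    · simp [u, p1, p2, pullback.condition]
    · simp [u]
  exact
  { E := image u
    i := image.ι u
    T := X.E
    j := X.i
    f := sq.lift
    mono_i := inferInstance
    hP := S.hquot (factorThruImage u) inferInstance
      (S.hext _ ((ShortComplex.Splitting.ofHasBinaryBiproduct F G).shortExact) hPF hPG)
    comm := sq.fac_right
    hS := by
      intro A z hz
      haveI := hg'epi
      obtain ⟨A₁, π₁, hπ₁, x, hx⟩ := surjective_up_to_refinements_of_epi
        (g' ≫ S.C.homologyπ n) (S.C.liftCycles z (n + 1) (by simp) hz ≫ S.C.homologyπ n)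
      have h0 : (π₁ ≫ S.C.liftCycles z (n + 1) (by simp) hz - x ≫ g') ≫ S.C.homologyπ n = 0 := by
        rw [Preadditive.sub_comp, Category.assoc, hx]
        simp
      obtain ⟨A₂, π₂, hπ₂, w, hw⟩ := (exact_toCycles S n).exact_up_to_refinements _ h0
      refine ⟨A₂, π₂ ≫ π₁, epi_comp _ _, π₂ ≫ x ≫ biprod.inr ≫ factorThruImage u, w, ?_⟩
      have h3 := hw =≫ S.C.iCycles n
      simp only [Category.assoc, Preadditive.sub_comp, Preadditive.comp_sub,
        HomologicalComplex.liftCycles_i,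
        HomologicalComplex.toCycles_i] at h3
      have key : (π₂ ≫ x ≫ biprod.inr ≫ factorThruImage u) ≫ image.ι u
          = π₂ ≫ x ≫ (g' ≫ S.C.iCycles n) := by
        simp only [Category.assoc, image.fac]
        rw [biprod.inr_desc]
      rw [key, Category.assoc]
      exact sub_eq_iff_eq_add'.mp (by simpa [Category.assoc] using h3)
    hI := by
      intro A t w h
      haveI := hgepi
      obtain ⟨A₁, π₁, hπ₁, x, hx⟩ := surjective_up_to_refinements_of_epi
        (g ≫ factorThruImage p2) (pullback.lift w t h.symm ≫ factorThruImage p2)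
      refine ⟨A₁, π₁, hπ₁, x ≫ biprod.inl ≫ factorThruImage u, ?_⟩
      have hlift1 : biprod.inl ≫ factorThruImage u ≫ sq.lift = g ≫ p2 := by
        rw [sq.fac_left, biprod.inl_desc]
      have h4 := hx =≫ image.ι p2
      simp only [Category.assoc, image.fac] at h4
      -- h4 : π₁ ≫ pullback.lift w t _ ≫ p2 = x ≫ g ≫ p2
      calc π₁ ≫ t = π₁ ≫ pullback.lift w t h.symm ≫ p2 := by rw [pullback.lift_snd]
        _ = x ≫ g ≫ p2 := h4
        _ = (x ≫ biprod.inl ≫ factorThruImage u) ≫ sq.lift := by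
            simp only [Category.assoc, hlift1] }

/-- The descending recursion. -/
noncomputable def St (n : ℤ) : Bundle S n :=
  if h : S.b < n then trivialBundle S n (S.hb n h)
  else mkStep S n (St (n + 1))
termination_by (S.b + 1 - n).toNat
decreasing_by omega

lemma St_pos (n : ℤ) (h : S.b < n) : St S n = trivialBundle S n (S.hb n h) := by
  rw [St]; exact dif_pos h

lemma St_le (n : ℤ) (h : ¬ S.b < n) : St S n = mkStep S n (St S (n + 1)) := by
  rw [St]; exact dif_neg h

lemma exists_dE (m n : ℤ) (hmn : m + 1 = n) :
    ∃ dd : (St S m).E ⟶ (St S n).E,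
      dd ≫ (St S n).i = (St S m).i ≫ S.C.d m n ∧
      ∀ ⦃A : 𝔖⦄ (t : A ⟶ (St S n).E) (w : A ⟶ S.C.X m),
        t ≫ (St S n).i = w ≫ S.C.d m n →
        ∃ (A' : 𝔖) (π : A' ⟶ A) (_ : Epi π) (e : A' ⟶ (St S m).E), π ≫ t = e ≫ dd := by
  subst hmn
  by_cases h : S.b < m
  · rw [St_pos S m h, St_pos S (m + 1) (by omega)]
    refine ⟨0, by simp [trivialBundle]; exact zero_comp, ?_⟩
    intro A t w hw
    refine ⟨A, 𝟙 A, inferInstance, 0, ?_⟩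
    rw [(isZero_zero 𝔖).eq_of_tgt t 0]
    simp
    exact Category.id_comp _
  · rw [St_le S m h]
    exact ⟨(mkStep S m (St S (m + 1))).f, (mkStep S m (St S (m + 1))).comm,
      (mkStep S m (St S (m + 1))).hI⟩

noncomputable def dE (m n : ℤ) (h : m + 1 = n) : (St S m).E ⟶ (St S n).E :=
  (exists_dE S m n h).choose

lemma dE_comm (m n : ℤ) (h : m + 1 = n) :
    dE S m n h ≫ (St S n).i = (St S m).i ≫ S.C.d m n :=
  (exists_dE S m n h).choose_spec.1

lemma dE_I (m n : ℤ) (h : m + 1 = n) :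
    ∀ ⦃A : 𝔖⦄ (t : A ⟶ (St S n).E) (w : A ⟶ S.C.X m),
      t ≫ (St S n).i = w ≫ S.C.d m n →
      ∃ (A' : 𝔖) (π : A' ⟶ A) (_ : Epi π) (e : A' ⟶ (St S m).E), π ≫ t = e ≫ dE S m n h :=
  (exists_dE S m n h).choose_spec.2

/-- The subcomplex. -/
@[reducible] noncomputable def EC : CochainComplex 𝔖 ℤ where
  X n := (St S n).E
  d m n := if h : m + 1 = n then dE S m n h else 0
  shape m n h := dif_neg (by simpa using h)
  d_comp_d' i j k hij hjk := by
    have hij' : i + 1 = j := hij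
    have hjk' : j + 1 = k := hjk
    rw [dif_pos hij', dif_pos hjk']
    haveI := (St S k).mono_i
    rw [← cancel_mono (St S k).i]
    simp only [Category.assoc, zero_comp]
    rw [dE_comm, ← Category.assoc, dE_comm, Category.assoc,
      HomologicalComplex.d_comp_d, comp_zero]

lemma EC_d (m n : ℤ) (h : m + 1 = n) : (EC S).d m n = dE S m n h := dif_pos h

/-- The inclusion map. -/
noncomputable def incl : EC S ⟶ S.C where
  f n := (St S n).i
  comm' := by
    intro i j hij
    have hij' : i + 1 = j := hij
    show (St S i).i ≫ S.C.d i j = (EC S).d i j ≫ (St S j).i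
    rw [EC_d S i j hij', dE_comm]

lemma EC_isZero_of_gt (n : ℤ) (h : S.b < n) : IsZero ((EC S).X n) := by
  show IsZero (St S n).E
  rw [St_pos S n h]
  exact isZero_zero _

lemma incl_f (n : ℤ) : (incl S).f n = (St S n).i := rfl

lemma cycle_to_C (n : ℤ) {A : 𝔖} (e : A ⟶ (EC S).X n) (he : e ≫ (EC S).d n (n + 1) = 0) :
    (e ≫ (St S n).i) ≫ S.C.d n (n + 1) = 0 := by
  haveI := (St S (n + 1)).mono_i
  have h1 : (St S n).i ≫ S.C.d n (n + 1) = (EC S).d n (n + 1) ≫ (St S (n + 1)).i := by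
    rw [EC_d S n (n + 1) rfl, dE_comm]
  rw [Category.assoc, h1, ← Category.assoc, he, zero_comp]

lemma liftCycles_cyclesMap (n : ℤ) {A : 𝔖} (e : A ⟶ (EC S).X n)
    (he : e ≫ (EC S).d n (n + 1) = 0) :
    (EC S).liftCycles e (n + 1) (by simp) he ≫ HomologicalComplex.cyclesMap (incl S) n =
      S.C.liftCycles (e ≫ (St S n).i) (n + 1) (by simp) (cycle_to_C S n e he) := by
  rw [← cancel_mono (S.C.iCycles n)]
  rw [Category.assoc, HomologicalComplex.cyclesMap_i, ← Category.assoc,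
    HomologicalComplex.liftCycles_i, HomologicalComplex.liftCycles_i]
  rfl

lemma homology_epi (n : ℤ) : Epi (HomologicalComplex.homologyMap (incl S) n) := by
  rw [epi_iff_surjective_up_to_refinements]
  intro A γ
  obtain ⟨A₁, π₁, hπ₁, z, hz, hγ⟩ :=
    S.C.eq_liftCycles_homologyπ_up_to_refinements γ (n + 1) (by simp)
  obtain ⟨A₂, π₂, hπ₂, e, w, he⟩ := (St S n).hS z hz
  have hzi : (e ≫ (St S n).i) ≫ S.C.d n (n + 1) = 0 := by
    have h2 := he =≫ S.C.d n (n + 1)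
    simp only [Preadditive.add_comp, Category.assoc, hz, comp_zero,
      HomologicalComplex.d_comp_d, add_zero, zero_add] at h2
    simpa [Category.assoc] using h2.symm
  have hcyc : e ≫ (EC S).d n (n + 1) = 0 := by
    haveI := (St S (n + 1)).mono_i
    rw [EC_d S n (n + 1) rfl, ← cancel_mono (St S (n + 1)).i, Category.assoc, dE_comm,
      zero_comp, ← Category.assoc]
    exact hzi
  refine ⟨A₂, π₂ ≫ π₁, epi_comp _ _,
    (EC S).liftCycles e (n + 1) (by simp) hcyc ≫ (EC S).homologyπ n, ?_⟩
  have hw0 : S.C.liftCycles (w ≫ S.C.d (n - 1) n) (n + 1) (by simp)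
      (by rw [Category.assoc, HomologicalComplex.d_comp_d, comp_zero]) ≫ S.C.homologyπ n = 0 :=
    S.C.liftCycles_homologyπ_eq_zero_of_boundary _ (n + 1) (by simp) w rfl
  have hadd : S.C.liftCycles (π₂ ≫ z) (n + 1) (by simp)
        (by rw [Category.assoc, hz, comp_zero]) =
      S.C.liftCycles (e ≫ (St S n).i) (n + 1) (by simp) (cycle_to_C S n e hcyc) +
      S.C.liftCycles (w ≫ S.C.d (n - 1) n) (n + 1) (by simp)
        (by rw [Category.assoc, HomologicalComplex.d_comp_d, comp_zero]) := by
    rw [← cancel_mono (S.C.iCycles n), Preadditive.add_comp]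
    simp only [HomologicalComplex.liftCycles_i]
    exact he
  rw [Category.assoc, hγ, ← Category.assoc, HomologicalComplex.comp_liftCycles, hadd,
    Preadditive.add_comp, hw0, add_zero, Category.assoc,
    HomologicalComplex.homologyπ_naturality, ← Category.assoc, liftCycles_cyclesMap]

lemma homology_mono (n : ℤ) : Mono (HomologicalComplex.homologyMap (incl S) n) := by
  rw [Preadditive.mono_iff_cancel_zero]
  intro A γ hγ0
  obtain ⟨A₁, π₁, hπ₁, e, he, hγ⟩ :=
    (EC S).eq_liftCycles_homologyπ_up_to_refinements γ (n + 1) (by simp)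
  have hz0 : S.C.liftCycles (e ≫ (St S n).i) (n + 1) (by simp) (cycle_to_C S n e he) ≫
      S.C.homologyπ n = 0 := by
    have h2 := hγ =≫ HomologicalComplex.homologyMap (incl S) n
    rw [Category.assoc, hγ0, comp_zero] at h2
    rw [Category.assoc, HomologicalComplex.homologyπ_naturality, ← Category.assoc,
      liftCycles_cyclesMap] at h2
    exact h2.symm
  obtain ⟨A₂, π₂, hπ₂, w, hw⟩ := (exact_toCycles S n).exact_up_to_refinements _ hz0
  have hw' : (π₂ ≫ e) ≫ (St S n).i = w ≫ S.C.d (n - 1) n := by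
    have h3 := hw =≫ S.C.iCycles n
    simp only [Category.assoc, HomologicalComplex.liftCycles_i,
      HomologicalComplex.toCycles_i] at h3
    simpa [Category.assoc] using h3
  obtain ⟨A₃, π₃, hπ₃, e', he'⟩ := dE_I S (n - 1) n (by ring) (π₂ ≫ e) w hw'
  have hb0 : (EC S).liftCycles ((π₃ ≫ π₂) ≫ e) (n + 1) (by simp)
      (by rw [Category.assoc, he, comp_zero]) ≫ (EC S).homologyπ n = 0 := by
    have heq : (π₃ ≫ π₂) ≫ e = e' ≫ (EC S).d (n - 1) n := by
      rw [EC_d S (n - 1) n (by ring), Category.assoc]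
      exact he'
    exact (EC S).liftCycles_homologyπ_eq_zero_of_boundary _ (n + 1) (by simp) e' heq
  have hfin : ((π₃ ≫ π₂) ≫ π₁) ≫ γ = 0 := by
    rw [Category.assoc, hγ, ← Category.assoc, HomologicalComplex.comp_liftCycles]
    exact hb0
  haveI := hπ₁; haveI := hπ₂; haveI := hπ₃
  exact zero_of_epi_comp ((π₃ ≫ π₂) ≫ π₁) hfin

end SerreResolutionAux

open CategoryTheory CategoryTheory.Limits

theorem serre_subcategory_complex_resolution
    {𝔖 : Type*} [Category 𝔖] [Abelian 𝔖]
    (P : 𝔖 → Prop)   -- membership in the full subcategory 𝔖'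
    -- 𝔖' is closed under subobjects
    (hsub : ∀ {X Y : 𝔖} (f : X ⟶ Y), Mono f → P Y → P X)
    -- 𝔖' is closed under quotients
    (hquot : ∀ {X Y : 𝔖} (f : X ⟶ Y), Epi f → P X → P Y)
    -- 𝔖' is closed under extensions
    (hext : ∀ S : ShortComplex 𝔖, S.ShortExact → P S.X₁ → P S.X₃ → P S.X₂)
    -- the lifting property (C4)
    (hlift : ∀ {A A' : 𝔖} (f : A ⟶ A'), Epi f → P A' →
      ∃ (B' : 𝔖) (g : B' ⟶ A), P B' ∧ Epi (g ≫ f))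
    (C : CochainComplex 𝔖 ℤ)
    -- `C` is bounded
    (hbdd : ∃ a b : ℤ, ∀ n : ℤ, (n < a ∨ b < n) → IsZero (C.X n))
    -- the cohomology of `C` lies in 𝔖'
    (hcoh : ∀ n : ℤ, P (C.homology n)) :
    ∃ (E : CochainComplex 𝔖 ℤ) (ι : E ⟶ C),
      (∀ n : ℤ, P (E.X n)) ∧
      (∃ a b : ℤ, ∀ n : ℤ, (n < a ∨ b < n) → IsZero (E.X n)) ∧
      (∀ n : ℤ, Mono (ι.f n)) ∧
      QuasiIso ι := by
  obtain ⟨a, b, hab⟩ := hbdd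
  let S : SerreResolutionAux.Setup 𝔖 :=
    { P := P, hsub := hsub, hquot := hquot, hext := hext, hlift := hlift, C := C,
      hcoh := hcoh, b := b, hb := fun n hn => hab n (Or.inr hn) }
  refine ⟨SerreResolutionAux.EC S, SerreResolutionAux.incl S,
    fun n => (SerreResolutionAux.St S n).hP, ⟨a, b, ?_⟩,
    fun n => (SerreResolutionAux.St S n).mono_i, ?_⟩
  · intro n hn
    rcases hn with hn | hn
    · haveI := (SerreResolutionAux.St S n).mono_i
      exact IsZero.of_mono (SerreResolutionAux.St S n).i (hab n (Or.inl hn))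
    · exact SerreResolutionAux.EC_isZero_of_gt S n hn
  · constructor
    intro n
    rw [quasiIsoAt_iff_isIso_homologyMap]
    haveI := SerreResolutionAux.homology_mono S n
    haveI := SerreResolutionAux.homology_epi S n
    exact isIso_of_mono_of_epi _
end
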